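/- Let ρ : ℝ^{2d} → Mat_{2d}(ℝ) be differentiable and let T_{IJK} : ℝ^{2d} → ℝ be differentiable and totally antisymmetric in I, J, K. With the generalized C-bracket [[A,B]]^J := ρ^L{}_I ( A^I ∂_L B^J − ½ η^{IJ} A^K ∂_L B_K − B^I ∂_L A^J + ½ η^{IJ} B^K ∂_L A_K ) + ½ T_{IK}{}^J A^I B^K, the compatibility condition holds for all smooth A, B, C : ℝ^{2d} → ℝ^{2d}: ⟨[[C,A]] + 𝒟_+⟨C,A⟩, B⟩ + ⟨A, [[C,B]] + 𝒟_+⟨C,B⟩⟩ = ρ(C)⟨A,B⟩, where ⟨A,B⟩ := η_{IJ}A^I B^J, ρ(C)f := ρ^L{}_I C^I ∂_L f and (𝒟_+f)^J := ½ η^{IJ} ρ^L{}_I ∂_L f. -/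

import Mathlib

open scoped BigOperators

noncomputable section

/-- Doubled index set: `I = 1,…,2d`, realized as `Fin d ⊕ Fin d`. -/
abbrev DIdx (d : ℕ) := Fin d ⊕ Fin d

/-- The doubled space `ℝ^{2d}`. -/
abbrev DSpace (d : ℕ) := DIdx d → ℝ

/-- The constant O(d,d)-invariant metric `η = ((0,1_d),(1_d,0))`; numerically `η⁻¹ = η`. -/
def eta {d : ℕ} : DIdx d → DIdx d → ℝ
  | Sum.inl i, Sum.inr j => if i = j then 1 else 0
  | Sum.inr i, Sum.inl j => if i = j then 1 else 0
  | _, _ => 0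

/-- Partial derivative `∂_I f (x)`. -/
def pd {d : ℕ} (f : DSpace d → ℝ) (I : DIdx d) (x : DSpace d) : ℝ :=
  fderiv ℝ f x (Pi.single I 1)

/-- Lowered components `A_I := η_{IJ} A^J`. -/
def low {d : ℕ} (A : DSpace d → DSpace d) (I : DIdx d) : DSpace d → ℝ :=
  fun x => ∑ J, eta I J * A x J

/-- Raised derivative `∂^I f := η^{IJ} ∂_J f`. -/
def pdU {d : ℕ} (f : DSpace d → ℝ) (I : DIdx d) (x : DSpace d) : ℝ :=
  ∑ J, eta I J * pd f J x

/-- The generalized C-bracket with anchor `ρ` and twist `T`: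
`[[A,B]]^J := ρ^L{}_I ( A^I ∂_L B^J − ½ η^{IJ} A^K ∂_L B_K − B^I ∂_L A^J + ½ η^{IJ} B^K ∂_L A_K )
  + ½ T_{IK}{}^J A^I B^K`. -/
def cbGen {d : ℕ} (ρ : DSpace d → DIdx d → DIdx d → ℝ)
    (T : DSpace d → DIdx d → DIdx d → DIdx d → ℝ)
    (A B : DSpace d → DSpace d) (J : DIdx d) (x : DSpace d) : ℝ :=
  (∑ L, ∑ I, ρ x L I *
      (A x I * pd (fun y => B y J) L x
        - (1/2) * eta I J * ∑ K, A x K * pd (low B K) L x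
        - B x I * pd (fun y => A y J) L x
        + (1/2) * eta I J * ∑ K, B x K * pd (low A K) L x))
  + (1/2) * ∑ I, ∑ K, (∑ L, T x I K L * eta L J) * A x I * B x K

/-- The derivative `(𝒟₊f)^J := ½ η^{IJ} ρ^L{}_I ∂_L f`. -/
def Dplus {d : ℕ} (ρ : DSpace d → DIdx d → DIdx d → ℝ) (f : DSpace d → ℝ)
    (J : DIdx d) (x : DSpace d) : ℝ :=
  (1/2) * ∑ I, ∑ L, eta J I * ρ x L I * pd f L x

namespace S8
def swp {d : ℕ} : DIdx d → DIdx d := Sum.elim Sum.inr Sum.inl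

@[simp] lemma swp_swp {d : ℕ} (I : DIdx d) : swp (swp I) = I := by cases I <;> rfl

lemma eta_eq {d : ℕ} (I J : DIdx d) : eta I J = if I = swp J then 1 else 0 := by
  cases I <;> cases J <;> simp [eta, swp, eq_comm]

lemma sum_eta_mul {d : ℕ} (I : DIdx d) (v : DIdx d → ℝ) :
    ∑ J, eta I J * v J = v (swp I) := by
  have : ∀ J : DIdx d, eta I J * v J = if J = swp I then v J else 0 := by
    intro J
    rcases eq_or_ne J (swp I) with h | h
    · subst h; simp [eta_eq]
    · have : I ≠ swp J := by
        intro hh; apply h; rw [hh, swp_swp]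
      simp [eta_eq, this, h]
  simp [this]

lemma sum_swp {d : ℕ} (f : DIdx d → ℝ) : ∑ I, f (swp I) = ∑ I, f I :=
  Fintype.sum_bijective swp (Function.Involutive.bijective swp_swp) _ _ (fun _ => rfl)

lemma low_eq {d : ℕ} (A : DSpace d → DSpace d) (K : DIdx d) :
    low A K = fun y => A y (swp K) := by
  funext y; exact sum_eta_mul K (A y)

variable {d : ℕ}

lemma diffAt_comp {A : DSpace d → DSpace d} (hA : ContDiff ℝ (⊤ : ℕ∞) A) (I : DIdx d) (x : DSpace d) :
    DifferentiableAt ℝ (fun y => A y I) x :=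
  ((ContinuousLinearMap.proj I : DSpace d →L[ℝ] ℝ).differentiable.comp
    (hA.differentiable (by simp))).differentiableAt

lemma pd_sum {ι : Type*} [Fintype ι] (f : ι → DSpace d → ℝ) (L : DIdx d) (x : DSpace d)
    (h : ∀ i, DifferentiableAt ℝ (f i) x) :
    pd (fun y => ∑ i, f i y) L x = ∑ i, pd (f i) L x := by
  unfold pd
  rw [fderiv_fun_sum (fun i _ => h i)]
  simp

lemma pd_mul {f g : DSpace d → ℝ} (hf : DifferentiableAt ℝ f x) (hg : DifferentiableAt ℝ g x)
    (L : DIdx d) :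
    pd (fun y => f y * g y) L x = pd f L x * g x + f x * pd g L x := by
  unfold pd
  rw [fderiv_fun_mul hf hg]
  simp only [ContinuousLinearMap.add_apply, ContinuousLinearMap.smul_apply, smul_eq_mul]
  ring


lemma eta_symm {d : ℕ} (I J : DIdx d) : eta I J = eta J I := by
  cases I <;> cases J <;> simp [eta, eq_comm]

lemma inner_eq (F G : DSpace d → DSpace d) :
    (fun y => ∑ K, ∑ L, eta K L * F y K * G y L) = fun y => ∑ L, F y (swp L) * G y L := by
  funext y
  rw [Finset.sum_comm]
  refine Finset.sum_congr rfl fun L _ => ?_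
  have : ∀ K : DIdx d, eta K L * F y K * G y L = (eta L K * F y K) * G y L := by
    intro K; rw [eta_symm]
  rw [Finset.sum_congr rfl fun K _ => this K, ← Finset.sum_mul, sum_eta_mul]

lemma pd_inner {F G : DSpace d → DSpace d} (hF : ContDiff ℝ (⊤ : ℕ∞) F) (hG : ContDiff ℝ (⊤ : ℕ∞) G)
    (L0 : DIdx d) (x : DSpace d) :
    pd (fun y => ∑ K, ∑ L, eta K L * F y K * G y L) L0 x
      = ∑ M, (pd (fun y => F y (swp M)) L0 x * G x M + F x (swp M) * pd (fun y => G y M) L0 x) := by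
  rw [inner_eq]
  rw [pd_sum (fun M y => F y (swp M) * G y M) L0 x
      (fun M => (diffAt_comp hF (swp M) x).mul (diffAt_comp hG M x))]
  exact Finset.sum_congr rfl fun M _ =>
    pd_mul (diffAt_comp hF (swp M) x) (diffAt_comp hG M x) L0

lemma sum_eta_mul' (I : DIdx d) (v : DIdx d → ℝ) :
    ∑ M, eta M I * v M = v (swp I) := by
  rw [Finset.sum_congr rfl fun M _ => by rw [eta_symm]]
  exact sum_eta_mul I v

lemma c_outer (f g : DIdx d → ℝ) :
    ∑ I, ∑ J, eta I J * f I * g J = ∑ I, f I * g (swp I) := by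
  refine Finset.sum_congr rfl fun I _ => ?_
  calc ∑ J, eta I J * f I * g J = ∑ J, eta I J * (f I * g J) :=
        Finset.sum_congr rfl fun J _ => by ring
    _ = f I * g (swp I) := by rw [sum_eta_mul I (fun J => f I * g J)]

lemma c_outer'' (f g : DIdx d → ℝ) :
    ∑ I, ∑ J, eta I J * f I * g J = ∑ J, g J * f (swp J) := by
  rw [c_outer, ← sum_swp (fun I => g I * f (swp I))]
  exact Finset.sum_congr rfl fun I _ => by rw [swp_swp]; ring

lemma reindex_mul (u v : DIdx d → ℝ) :
    ∑ K, u K * v (swp K) = ∑ K, v K * u (swp K) := by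
  rw [← sum_swp (fun K => v K * u (swp K))]
  exact Finset.sum_congr rfl fun K _ => by rw [swp_swp]; ring

lemma reindex_mul' (u v : DIdx d → ℝ) :
    ∑ K, u (swp K) * v K = ∑ K, u K * v (swp K) := by
  rw [← sum_swp (fun K => u K * v (swp K))]
  exact Finset.sum_congr rfl fun K _ => by rw [swp_swp]


lemma c_right (I : DIdx d) (v : DIdx d → ℝ) :
    ∑ L, v L * eta L I = v (swp I) := by
  rw [Finset.sum_congr rfl fun L _ => (by rw [eta_symm]; ring :
    v L * eta L I = eta I L * v L)]
  exact sum_eta_mul I v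

lemma piece1 (r : DIdx d → DIdx d → ℝ) (a b c : DIdx d → ℝ) (da dc : DIdx d → DIdx d → ℝ) :
    ∑ I, (∑ L, ∑ M, r L M *
        (c M * da L I - 1/2 * eta M I * ∑ K, c K * da L (swp K)
          - a M * dc L I + 1/2 * eta M I * ∑ K, a K * dc L (swp K))) * b (swp I)
    = ∑ L, ∑ M, (r L M * c M * (∑ K, da L K * b (swp K))
        - r L M * a M * (∑ K, dc L K * b (swp K))
        + 1/2 * (r L M * b M * ((∑ K, dc L K * a (swp K)) - (∑ K, da L K * c (swp K))))) := by
  simp only [Finset.sum_mul]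
  rw [Finset.sum_comm]
  refine Finset.sum_congr rfl fun L _ => ?_
  rw [Finset.sum_comm]
  refine Finset.sum_congr rfl fun M _ => ?_
  calc ∑ I, r L M *
        (c M * da L I - 1/2 * eta M I * ∑ K, c K * da L (swp K)
          - a M * dc L I + 1/2 * eta M I * ∑ K, a K * dc L (swp K)) * b (swp I)
      = ∑ I, ((r L M * c M * (da L I * b (swp I))
          - r L M * a M * (dc L I * b (swp I)))
          + eta M I * (1/2 * r L M *
              ((∑ K, a K * dc L (swp K)) - (∑ K, c K * da L (swp K))) * b (swp I))) :=
        Finset.sum_congr rfl fun I _ => by ring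
    _ = (∑ I, (r L M * c M * (da L I * b (swp I)) - r L M * a M * (dc L I * b (swp I))))
          + ∑ I, eta M I * (1/2 * r L M *
              ((∑ K, a K * dc L (swp K)) - (∑ K, c K * da L (swp K))) * b (swp I)) :=
        Finset.sum_add_distrib
    _ = ((∑ I, r L M * c M * (da L I * b (swp I))) - ∑ I, r L M * a M * (dc L I * b (swp I)))
          + 1/2 * r L M *
              ((∑ K, a K * dc L (swp K)) - (∑ K, c K * da L (swp K))) * b (swp (swp M)) := by
        rw [Finset.sum_sub_distrib,
          sum_eta_mul M (fun I => 1/2 * r L M *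
              ((∑ K, a K * dc L (swp K)) - (∑ K, c K * da L (swp K))) * b (swp I))]
    _ = _ := by
        rw [swp_swp, ← Finset.mul_sum, ← Finset.mul_sum, reindex_mul a (dc L),
          reindex_mul c (da L)]
        ring

lemma pull3 (u : DIdx d → DIdx d → DIdx d → ℝ) (v : DIdx d → ℝ) :
    ∑ I, (1/2 * ∑ M, ∑ K, u M K I) * v I
      = 1/2 * ∑ M, ∑ K, ∑ I, u M K I * v I := by
  calc ∑ I, (1/2 * ∑ M, ∑ K, u M K I) * v I
      = ∑ I, ∑ M, ∑ K, 1/2 * (u M K I * v I) := by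
        refine Finset.sum_congr rfl fun I _ => ?_
        rw [Finset.mul_sum, Finset.sum_mul]
        refine Finset.sum_congr rfl fun M _ => ?_
        rw [Finset.mul_sum, Finset.sum_mul]
        exact Finset.sum_congr rfl fun K _ => by ring
    _ = ∑ M, ∑ K, ∑ I, 1/2 * (u M K I * v I) := by
        rw [Finset.sum_comm]
        exact Finset.sum_congr rfl fun M _ => Finset.sum_comm
    _ = 1/2 * ∑ M, ∑ K, ∑ I, u M K I * v I := by
        simp only [← Finset.mul_sum]

lemma piece2 (t : DIdx d → DIdx d → DIdx d → ℝ) (a b c : DIdx d → ℝ) :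
    ∑ I, (1/2 * ∑ M, ∑ K, (∑ L, t M K L * eta L I) * c M * a K) * b (swp I)
    = 1/2 * ∑ M, ∑ K, ∑ I, t M K I * c M * a K * b I := by
  simp only [c_right]
  rw [sum_swp (fun I => (1/2 * ∑ M, ∑ K, t M K I * c M * a K) * b I)]
  exact pull3 (fun M K I => t M K I * c M * a K) b

lemma piece3 (r : DIdx d → DIdx d → ℝ) (a b c : DIdx d → ℝ) (da dc : DIdx d → DIdx d → ℝ) :
    ∑ I, (1/2 * ∑ M, ∑ L, eta I M * r L M *
        ∑ K, (dc L (swp K) * a K + c (swp K) * da L K)) * b (swp I)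
    = ∑ L, ∑ M, (1/2 * (r L M * b M *
        ((∑ K, dc L K * a (swp K)) + (∑ K, da L K * c (swp K))))) := by
  have h1 : ∀ I : DIdx d, (∑ M, ∑ L, eta I M * r L M *
        ∑ K, (dc L (swp K) * a K + c (swp K) * da L K))
      = ∑ L, r L (swp I) * ∑ K, (dc L (swp K) * a K + c (swp K) * da L K) := by
    intro I
    calc ∑ M, ∑ L, eta I M * r L M * ∑ K, (dc L (swp K) * a K + c (swp K) * da L K)
        = ∑ M, eta I M * ∑ L, r L M * ∑ K, (dc L (swp K) * a K + c (swp K) * da L K) := by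
          refine Finset.sum_congr rfl fun M _ => ?_
          rw [Finset.mul_sum]
          exact Finset.sum_congr rfl fun L _ => by ring
      _ = _ := sum_eta_mul I _
  rw [Finset.sum_congr rfl fun I _ => by rw [h1 I]]
  rw [sum_swp (fun I => (1/2 * ∑ L, r L I *
      ∑ K, (dc L (swp K) * a K + c (swp K) * da L K)) * b I)]
  calc ∑ I, (1/2 * ∑ L, r L I * ∑ K, (dc L (swp K) * a K + c (swp K) * da L K)) * b I
      = ∑ I, ∑ L, (1/2 * (r L I * ∑ K, (dc L (swp K) * a K + c (swp K) * da L K))) * b I := by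
        refine Finset.sum_congr rfl fun I _ => ?_
        rw [Finset.mul_sum, Finset.sum_mul]
    _ = ∑ L, ∑ I, (1/2 * (r L I * ∑ K, (dc L (swp K) * a K + c (swp K) * da L K))) * b I :=
        Finset.sum_comm
    _ = _ := by
        refine Finset.sum_congr rfl fun L _ => Finset.sum_congr rfl fun M _ => ?_
        rw [Finset.sum_add_distrib, reindex_mul' (dc L) a,
          Finset.sum_congr rfl fun K (_ : K ∈ Finset.univ) =>
            (mul_comm (c (swp K)) (da L K))]
        ring

lemma block (r : DIdx d → DIdx d → ℝ) (t : DIdx d → DIdx d → DIdx d → ℝ)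
    (a b c : DIdx d → ℝ) (da dc : DIdx d → DIdx d → ℝ) :
    ∑ I, ((∑ L, ∑ M, r L M *
            (c M * da L I - 1/2 * eta M I * ∑ K, c K * da L (swp K)
              - a M * dc L I + 1/2 * eta M I * ∑ K, a K * dc L (swp K)))
          + 1/2 * ∑ M, ∑ K, (∑ L, t M K L * eta L I) * c M * a K
          + 1/2 * ∑ M, ∑ L, eta I M * r L M *
              ∑ K, (dc L (swp K) * a K + c (swp K) * da L K)) * b (swp I)
    = (∑ L, ∑ M, (r L M * c M * (∑ K, da L K * b (swp K))
        - r L M * a M * (∑ K, dc L K * b (swp K))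
        + r L M * b M * (∑ K, dc L K * a (swp K))))
      + 1/2 * ∑ M, ∑ K, ∑ I, t M K I * c M * a K * b I := by
  calc ∑ I, ((∑ L, ∑ M, r L M *
            (c M * da L I - 1/2 * eta M I * ∑ K, c K * da L (swp K)
              - a M * dc L I + 1/2 * eta M I * ∑ K, a K * dc L (swp K)))
          + 1/2 * ∑ M, ∑ K, (∑ L, t M K L * eta L I) * c M * a K
          + 1/2 * ∑ M, ∑ L, eta I M * r L M *
              ∑ K, (dc L (swp K) * a K + c (swp K) * da L K)) * b (swp I)
      = (∑ I, (∑ L, ∑ M, r L M *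
            (c M * da L I - 1/2 * eta M I * ∑ K, c K * da L (swp K)
              - a M * dc L I + 1/2 * eta M I * ∑ K, a K * dc L (swp K))) * b (swp I))
        + (∑ I, (1/2 * ∑ M, ∑ K, (∑ L, t M K L * eta L I) * c M * a K) * b (swp I))
        + (∑ I, (1/2 * ∑ M, ∑ L, eta I M * r L M *
              ∑ K, (dc L (swp K) * a K + c (swp K) * da L K)) * b (swp I)) := by
        rw [← Finset.sum_add_distrib, ← Finset.sum_add_distrib]
        exact Finset.sum_congr rfl fun I _ => by ring
    _ = _ := by
        rw [piece1 r a b c da dc, piece2 t a b c, piece3 r a b c da dc]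
        have hmerge : (∑ L, ∑ M, (r L M * c M * (∑ K, da L K * b (swp K))
              - r L M * a M * (∑ K, dc L K * b (swp K))
              + 1/2 * (r L M * b M * ((∑ K, dc L K * a (swp K)) - (∑ K, da L K * c (swp K))))))
            + (∑ L, ∑ M, (1/2 * (r L M * b M *
                ((∑ K, dc L K * a (swp K)) + (∑ K, da L K * c (swp K))))))
            = ∑ L, ∑ M, (r L M * c M * (∑ K, da L K * b (swp K))
              - r L M * a M * (∑ K, dc L K * b (swp K))
              + r L M * b M * (∑ K, dc L K * a (swp K))) := by
          rw [← Finset.sum_add_distrib]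
          refine Finset.sum_congr rfl fun L _ => ?_
          rw [← Finset.sum_add_distrib]
          exact Finset.sum_congr rfl fun M _ => by ring
        linarith [hmerge]

theorem key (r : DIdx d → DIdx d → ℝ) (t : DIdx d → DIdx d → DIdx d → ℝ)
    (a b c : DIdx d → ℝ) (da db dc : DIdx d → DIdx d → ℝ)
    (ht2 : ∀ I J K : DIdx d, t I J K = -t I K J) :
    ∑ I, ∑ J, eta I J *
        ((∑ L, ∑ M, r L M *
            (c M * da L I - 1/2 * eta M I * ∑ K, c K * da L (swp K)
              - a M * dc L I + 1/2 * eta M I * ∑ K, a K * dc L (swp K)))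
          + 1/2 * ∑ M, ∑ K, (∑ L, t M K L * eta L I) * c M * a K
          + 1/2 * ∑ M, ∑ L, eta I M * r L M *
              ∑ K, (dc L (swp K) * a K + c (swp K) * da L K)) * b J
    + ∑ I, ∑ J, eta I J * a I *
        ((∑ L, ∑ M, r L M *
            (c M * db L J - 1/2 * eta M J * ∑ K, c K * db L (swp K)
              - b M * dc L J + 1/2 * eta M J * ∑ K, b K * dc L (swp K)))
          + 1/2 * ∑ M, ∑ K, (∑ L, t M K L * eta L J) * c M * b K
          + 1/2 * ∑ M, ∑ L, eta J M * r L M *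
              ∑ K, (dc L (swp K) * b K + c (swp K) * db L K))
    = ∑ L, ∑ M, r L M * c M * ∑ K, (da L (swp K) * b K + a (swp K) * db L K) := by
  rw [c_outer, c_outer'', block r t a b c da dc, block r t b a c db dc]
  have hskew : ∑ M, ∑ K, ∑ I, t M K I * c M * b K * a I
      = -∑ M, ∑ K, ∑ I, t M K I * c M * a K * b I := by
    calc ∑ M, ∑ K, ∑ I, t M K I * c M * b K * a I
        = ∑ M, ∑ K, ∑ I, t M I K * c M * b I * a K :=
          Finset.sum_congr rfl fun M _ => Finset.sum_comm
      _ = ∑ M, ∑ K, ∑ I, (-(t M K I * c M * a K * b I)) := by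
          refine Finset.sum_congr rfl fun M _ => Finset.sum_congr rfl fun K _ =>
            Finset.sum_congr rfl fun I _ => ?_
          rw [ht2 M I K]; ring
      _ = _ := by simp only [Finset.sum_neg_distrib]
  have hmain : (∑ L, ∑ M, (r L M * c M * (∑ K, da L K * b (swp K))
        - r L M * a M * (∑ K, dc L K * b (swp K))
        + r L M * b M * (∑ K, dc L K * a (swp K))))
      + (∑ L, ∑ M, (r L M * c M * (∑ K, db L K * a (swp K))
        - r L M * b M * (∑ K, dc L K * a (swp K))
        + r L M * a M * (∑ K, dc L K * b (swp K))))
      = ∑ L, ∑ M, r L M * c M * ∑ K, (da L (swp K) * b K + a (swp K) * db L K) := by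
    rw [← Finset.sum_add_distrib]
    refine Finset.sum_congr rfl fun L _ => ?_
    rw [← Finset.sum_add_distrib]
    refine Finset.sum_congr rfl fun M _ => ?_
    rw [Finset.sum_add_distrib, reindex_mul' (da L) b, reindex_mul' a (db L), reindex_mul a (db L)]
    ring
  linarith [hskew, hmain]

end S8

/-- The compatibility condition for the generalized C-bracket:
`⟨[[C,A]] + 𝒟₊⟨C,A⟩, B⟩ + ⟨A, [[C,B]] + 𝒟₊⟨C,B⟩⟩ = ρ(C)⟨A,B⟩` for all smooth `A, B, C`. -/
theorem statement8 {d : ℕ} (ρ : DSpace d → DIdx d → DIdx d → ℝ)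
    (T : DSpace d → DIdx d → DIdx d → DIdx d → ℝ)
    (hρ : ∀ K J : DIdx d, ContDiff ℝ (⊤ : ℕ∞) fun x => ρ x K J)
    (hT : ∀ I J K : DIdx d, ContDiff ℝ (⊤ : ℕ∞) fun x => T x I J K)
    (hT1 : ∀ (x : DSpace d) (I J K : DIdx d), T x I J K = -T x J I K)
    (hT2 : ∀ (x : DSpace d) (I J K : DIdx d), T x I J K = -T x I K J)
    (A B C : DSpace d → DSpace d)
    (hA : ContDiff ℝ (⊤ : ℕ∞) A) (hB : ContDiff ℝ (⊤ : ℕ∞) B) (hC : ContDiff ℝ (⊤ : ℕ∞) C)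
    (x : DSpace d) :
    (∑ I, ∑ J, eta I J *
        (cbGen ρ T C A I x
          + Dplus ρ (fun y => ∑ K, ∑ L, eta K L * C y K * A y L) I x) * B x J)
      + (∑ I, ∑ J, eta I J * A x I *
        (cbGen ρ T C B J x
          + Dplus ρ (fun y => ∑ K, ∑ L, eta K L * C y K * B y L) J x))
    = ∑ L, ∑ I, ρ x L I * C x I *
        pd (fun y => ∑ K, ∑ M, eta K M * A y K * B y M) L x := by
  simp only [cbGen, Dplus, S8.low_eq, S8.pd_inner hC hA, S8.pd_inner hC hB, S8.pd_inner hA hB]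
  exact S8.key (fun L I => ρ x L I) (fun I K L => T x I K L) (A x) (B x) (C x)
    (fun L I => pd (fun y => A y I) L x) (fun L I => pd (fun y => B y I) L x)
    (fun L I => pd (fun y => C y I) L x) (fun I J K => hT2 x I J K)
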